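/- For unit vectors h and positive semidefinite A, B with largest/smallest eigenvalues p ≥ q (for A) and r ≥ s (for B), |⟨h, ABh⟩ − ⟨h, Ah⟩⟨h, Bh⟩| ≤ (1/4)(p−q)(r−s). -/

import Mathlib

/-!
Write `T = toEuclideanLin A`, `S = toEuclideanLin B` and `α = ⟪h, T h⟫`, `β = ⟪h, S h⟫`. Since `T`
is symmetric, `α` is real and the covariance `⟪h, T S h⟫ - α β` equals
`⟪T h - α h, S h - β h⟫`, so by Cauchy–Schwarz it is at most the product of the standard
deviations `‖T h - α h‖ ‖S h - β h‖`. As `α h` is the orthogonal projection of `T h` onto `ℂ h`,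
`‖T h - α h‖ ≤ ‖T h - c h‖` for `c = (p + q) / 2`, and the eigenvalues of `T - c` lie in
`[-(p - q) / 2, (p - q) / 2]`, which bounds the latter by `(p - q) / 2`.
-/

open Matrix ComplexOrder

section InnerProductSpace

variable {𝕜 E : Type*} [RCLike 𝕜] [NormedAddCommGroup E] [InnerProductSpace 𝕜 E]

open scoped InnerProductSpace

theorem norm_sub_inner_smul_le_norm_sub_smul {h : E} (hh : ‖h‖ = 1) (v : E) (c : 𝕜) :
    ‖v - ⟪h, v⟫_𝕜 • h‖ ≤ ‖v - c • h‖ := by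
  have horth : ⟪v - ⟪h, v⟫_𝕜 • h, (⟪h, v⟫_𝕜 - c) • h⟫_𝕜 = 0 := by
    rw [inner_smul_right, inner_sub_left, inner_smul_left, inner_self_eq_norm_sq_to_K, hh,
      inner_conj_symm]
    simp
  have hsplit : v - c • h = (v - ⟪h, v⟫_𝕜 • h) + (⟪h, v⟫_𝕜 - c) • h := by rw [sub_smul]; abel
  have hpyth := norm_add_sq_eq_norm_sq_add_norm_sq_of_inner_eq_zero _ _ horth
  rw [← hsplit] at hpyth
  nlinarith [norm_nonneg (v - ⟪h, v⟫_𝕜 • h), norm_nonneg (v - c • h),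
    sq_nonneg ‖(⟪h, v⟫_𝕜 - c) • h‖]

theorem LinearMap.IsSymmetric.inner_map_sub_inner_mul_inner {T : E →ₗ[𝕜] E} (hT : T.IsSymmetric)
    {h : E} (hh : ‖h‖ = 1) (w : E) :
    ⟪h, T w⟫_𝕜 - ⟪h, T h⟫_𝕜 * ⟪h, w⟫_𝕜 = ⟪T h - ⟪h, T h⟫_𝕜 • h, w - ⟪h, w⟫_𝕜 • h⟫_𝕜 := by
  have hreal : starRingEnd 𝕜 ⟪h, T h⟫_𝕜 = ⟪h, T h⟫_𝕜 := by rw [inner_conj_symm, hT h h]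
  rw [inner_sub_left, inner_sub_right, inner_sub_right, inner_smul_left, inner_smul_left,
    inner_smul_right, inner_smul_right, hreal, ← hT h w, hT h h, inner_self_eq_norm_sq_to_K, hh]
  push_cast
  ring

theorem OrthonormalBasis.norm_map_sub_smul_le {ι : Type*} [Fintype ι] (b : OrthonormalBasis ι 𝕜 E)
    {T : E →ₗ[𝕜] E} {μ : ι → 𝕜} (hT : ∀ i, T (b i) = μ i • b i) {c : 𝕜} {r : ℝ} (hr : 0 ≤ r)
    (hμ : ∀ i, ‖μ i - c‖ ≤ r) (x : E) :
    ‖T x - c • x‖ ≤ r * ‖x‖ := by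
  classical
  have hcoord : ∀ i, ⟪b i, T x - c • x⟫_𝕜 = (μ i - c) * ⟪b i, x⟫_𝕜 := by
    intro i
    simp_rw [← b.repr_apply_apply]
    conv_lhs => rw [← b.sum_repr x]
    simp [map_sum, hT, Pi.single_apply, sub_mul, mul_comm]
  have hsq : ‖T x - c • x‖ ^ 2 ≤ (r * ‖x‖) ^ 2 := by
    rw [← b.sum_sq_norm_inner_right, mul_pow, ← b.sum_sq_norm_inner_right, Finset.mul_sum]
    refine Finset.sum_le_sum fun i _ => ?_
    rw [hcoord, norm_mul, mul_pow]
    gcongr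
    exact hμ i
  exact (pow_le_pow_iff_left₀ (norm_nonneg _) (by positivity) two_ne_zero).mp hsq

end InnerProductSpace

namespace Matrix.IsHermitian

variable {𝕜 n : Type*} [RCLike 𝕜] [Fintype n] [DecidableEq n] {A : Matrix n n 𝕜}

theorem toEuclideanLin_eigenvectorBasis (hA : A.IsHermitian) (i : n) :
    toEuclideanLin A (hA.eigenvectorBasis i) =
      (hA.eigenvalues i : 𝕜) • hA.eigenvectorBasis i := by
  ext1
  rw [ofLp_toLpLin, toLin'_apply, hA.mulVec_eigenvectorBasis i]
  simp only [Pi.smul_apply, PiLp.smul_apply, RCLike.real_smul_eq_coe_mul, smul_eq_mul]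

theorem norm_toEuclideanLin_sub_inner_smul_le (hA : A.IsHermitian) {p q : ℝ}
    (hp : IsGreatest (Set.range hA.eigenvalues) p) (hq : IsLeast (Set.range hA.eigenvalues) q)
    {h : EuclideanSpace 𝕜 n} (hh : ‖h‖ = 1) :
    ‖toEuclideanLin A h - inner 𝕜 h (toEuclideanLin A h) • h‖ ≤ (p - q) / 2 := by
  have hcentre : ∀ i, ‖(hA.eigenvalues i : 𝕜) - (((p + q) / 2 : ℝ) : 𝕜)‖ ≤ (p - q) / 2 := by
    intro i
    rw [← RCLike.ofReal_sub, RCLike.norm_ofReal, abs_sub_le_iff]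
    constructor <;> linarith [hp.2 ⟨i, rfl⟩, hq.2 ⟨i, rfl⟩]
  calc _ ≤ ‖toEuclideanLin A h - (((p + q) / 2 : ℝ) : 𝕜) • h‖ :=
        norm_sub_inner_smul_le_norm_sub_smul hh _ _
    _ ≤ (p - q) / 2 * ‖h‖ :=
        hA.eigenvectorBasis.norm_map_sub_smul_le hA.toEuclideanLin_eigenvectorBasis
          (by linarith [hq.2 hp.1]) hcentre h
    _ = (p - q) / 2 := by rw [hh, mul_one]

end Matrix.IsHermitian

theorem variance_covariance_inequality {n : ℕ} (A B : Matrix (Fin n) (Fin n) ℂ)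
    (hA : A.PosSemidef) (hB : B.PosSemidef) (p q r s : ℝ)
    (hp : IsGreatest (Set.range hA.1.eigenvalues) p)
    (hq : IsLeast (Set.range hA.1.eigenvalues) q)
    (hr : IsGreatest (Set.range hB.1.eigenvalues) r)
    (hs : IsLeast (Set.range hB.1.eigenvalues) s)
    (h : EuclideanSpace ℂ (Fin n)) (hh : ‖h‖ = 1) :
    ‖(inner ℂ h (Matrix.toEuclideanLin (A * B) h) : ℂ) -
        (inner ℂ h (Matrix.toEuclideanLin A h) : ℂ) *
          (inner ℂ h (Matrix.toEuclideanLin B h) : ℂ)‖ ≤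
      (1 / 4) * (p - q) * (r - s) := by
  rw [toLpLin_mul_same, LinearMap.comp_apply,
    (isSymmetric_toEuclideanLin_iff.mpr hA.1).inner_map_sub_inner_mul_inner hh]
  calc _ ≤ ‖_‖ * ‖_‖ := norm_inner_le_norm _ _
    _ ≤ (p - q) / 2 * ((r - s) / 2) :=
        mul_le_mul (hA.1.norm_toEuclideanLin_sub_inner_smul_le hp hq hh)
          (hB.1.norm_toEuclideanLin_sub_inner_smul_le hr hs hh) (norm_nonneg _)
          (by linarith [hq.2 hp.1])
    _ = 1 / 4 * (p - q) * (r - s) := by ring
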